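/- If A is a symmetric 2^{k+1}×2^{k+1} matrix diagonalized by the standard Hadamard matrix H_{k+1}, and A is partitioned into 2^k×2^k blocks [[A₁, X],[Xᵀ, A₂]] conformally with H_{k+1} = [[H_k,H_k],[H_k,-H_k]], then A₁ = A₂, X = Xᵀ, and both A₁ and X are diagonalized by H_k. -/

import Mathlib

open Matrix

/-- The standard Hadamard matrix of order `2^k`, indexed by `ℤ₂^k`,
with `(u,v)` entry `(-1)^(u·v)`. -/
noncomputable def stdHadamard (k : ℕ) :
    Matrix (Fin k → ZMod 2) (Fin k → ZMod 2) ℝ :=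
  Matrix.of fun u v => (-1 : ℝ) ^ (∑ i, (u i * v i).val)

noncomputable def chi (a : ZMod 2) : ℝ := (-1 : ℝ) ^ a.val

lemma zval1 : ZMod.val (1 : ZMod 2) = 1 := rfl
lemma zval2 : ZMod.val (2 : ZMod 2) = 0 := rfl

lemma chi_zero : chi 0 = 1 := by norm_num [chi, ZMod.val_zero]
lemma chi_one : chi 1 = -1 := by norm_num [chi, zval1]

lemma chi_add (a b : ZMod 2) : chi (a + b) = chi a * chi b := by
  obtain rfl | rfl : a = 0 ∨ a = 1 := (by revert a; decide) <;> obtain rfl | rfl : b = 0 ∨ b = 1 := (by revert b; decide) <;> norm_num [chi, zval1, zval2]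

lemma sum_zmod2 (f : ZMod 2 → ℝ) : ∑ a : ZMod 2, f a = f 0 + f 1 := by
  show ∑ a : Fin 2, f a = _
  exact Fin.sum_univ_two (fun a : Fin 2 => f a)

lemma stdHadamard_apply (k : ℕ) (u v : Fin k → ZMod 2) :
    stdHadamard k u v = ∏ i, chi (u i * v i) := by
  simp [stdHadamard, chi, Finset.prod_pow_eq_pow_sum]

lemma sum_chi_mul (b : ZMod 2) : ∑ a : ZMod 2, chi (b * a) = if b = 0 then 2 else 0 := by
  rw [sum_zmod2]
  obtain rfl | rfl : b = 0 ∨ b = 1 := (by revert b; decide) <;> norm_num [chi, zval1, zval2]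

lemma sum_chi (k : ℕ) (w : Fin k → ZMod 2) :
    ∑ s : Fin k → ZMod 2, ∏ i, chi (w i * s i) = if w = 0 then (2:ℝ)^k else 0 := by
  rw [← Fintype.piFinset_univ,
    ← Finset.prod_univ_sum (fun _ : Fin k => (Finset.univ : Finset (ZMod 2)))
      (fun i a => chi (w i * a))]
  by_cases h : w = 0
  · subst h
    simp [sum_chi_mul, chi]
  · rw [if_neg h]
    obtain ⟨i, hi⟩ := Function.ne_iff.mp h
    exact Finset.prod_eq_zero (Finset.mem_univ i)
      (by rw [sum_chi_mul, if_neg (by simpa using hi)])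

lemma stdHadamard_mul_self (k : ℕ) :
    stdHadamard k * stdHadamard k = ((2:ℝ)^k) • 1 := by
  ext u v
  rw [Matrix.mul_apply]
  have : ∀ s, stdHadamard k u s * stdHadamard k s v = ∏ i, chi ((u i + v i) * s i) := by
    intro s
    rw [stdHadamard_apply, stdHadamard_apply, ← Finset.prod_mul_distrib]
    refine Finset.prod_congr rfl fun i _ => ?_
    rw [← chi_add, add_mul, mul_comm (s i) (v i)]
  simp_rw [this, sum_chi]
  have key : ∀ a b : ZMod 2, a + b = 0 ↔ a = b := by decide
  have huv : (fun i => u i + v i) = 0 ↔ u = v := by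
    constructor
    · intro h; funext i
      exact (key _ _).mp (congrFun h i)
    · intro h; subst h; funext i
      exact (key _ _).mpr rfl
  by_cases h : u = v
  · subst h; simp [huv, Matrix.one_apply]
  · rw [if_neg (by simpa [huv]), Matrix.smul_apply, Matrix.one_apply_ne h, smul_zero]

lemma stdHadamard_inv (k : ℕ) : (stdHadamard k)⁻¹ = ((2:ℝ)^k)⁻¹ • stdHadamard k := by
  apply Matrix.inv_eq_right_inv
  rw [Matrix.mul_smul, stdHadamard_mul_self, smul_smul,
    inv_mul_cancel₀ (by positivity), one_smul]

lemma offdiag_of_isDiag (k : ℕ) (M : Matrix (Fin k → ZMod 2) (Fin k → ZMod 2) ℝ)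
    (h : IsDiag ((stdHadamard k)⁻¹ * M * stdHadamard k)) :
    ∀ u v, u ≠ v → (stdHadamard k * M * stdHadamard k) u v = 0 := by
  intro u v huv
  have h0 := h huv
  rw [stdHadamard_inv, Matrix.smul_mul, Matrix.smul_mul, Matrix.smul_apply,
    smul_eq_mul] at h0
  exact (mul_eq_zero.mp h0).resolve_left (by positivity)

lemma isDiag_of_offdiag (k : ℕ) (M : Matrix (Fin k → ZMod 2) (Fin k → ZMod 2) ℝ)
    (h : ∀ u v, u ≠ v → (stdHadamard k * M * stdHadamard k) u v = 0) :
    IsDiag ((stdHadamard k)⁻¹ * M * stdHadamard k) := by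
  intro u v huv
  rw [stdHadamard_inv, Matrix.smul_mul, Matrix.smul_mul, Matrix.smul_apply,
    h u v huv, smul_zero]

lemma cancel_HMH (k : ℕ) (M N : Matrix (Fin k → ZMod 2) (Fin k → ZMod 2) ℝ)
    (h : stdHadamard k * M * stdHadamard k = stdHadamard k * N * stdHadamard k) :
    M = N := by
  have e : ∀ B : Matrix (Fin k → ZMod 2) (Fin k → ZMod 2) ℝ,
      stdHadamard k * (stdHadamard k * B * stdHadamard k) * stdHadamard k
        = ((2:ℝ)^k * (2:ℝ)^k) • B := by
    intro B
    calc stdHadamard k * (stdHadamard k * B * stdHadamard k) * stdHadamard k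
        = (stdHadamard k * stdHadamard k) * B * (stdHadamard k * stdHadamard k) := by
          simp only [Matrix.mul_assoc]
      _ = ((2:ℝ)^k * (2:ℝ)^k) • B := by
          rw [stdHadamard_mul_self, Matrix.smul_mul, Matrix.mul_smul,
            Matrix.one_mul, Matrix.mul_one, smul_smul]
  have h2 : ((2:ℝ)^k * (2:ℝ)^k) ≠ 0 := by positivity
  have := congrArg (fun B => stdHadamard k * B * stdHadamard k) h
  simp only [e] at this
  exact smul_right_injective _ h2 this

lemma stdHadamard_cons (k : ℕ) (a b : ZMod 2) (u v : Fin k → ZMod 2) :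
    stdHadamard (k+1) (Fin.cons a u) (Fin.cons b v) = chi (a*b) * stdHadamard k u v := by
  rw [stdHadamard_apply, stdHadamard_apply, Fin.prod_univ_succ]
  simp

lemma sum_cons (k : ℕ) (f : (Fin (k+1) → ZMod 2) → ℝ) :
    ∑ s, f s = ∑ a : ZMod 2, ∑ s : Fin k → ZMod 2, f (Fin.cons a s) := by
  rw [← (Fin.consEquiv (fun _ => ZMod 2)).sum_comp f, Fintype.sum_prod_type]
  rfl

lemma P_entry (k : ℕ) (A : Matrix (Fin (k+1) → ZMod 2) (Fin (k+1) → ZMod 2) ℝ)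
    (a b : ZMod 2) (u v : Fin k → ZMod 2) :
    (stdHadamard (k+1) * A * stdHadamard (k+1)) (Fin.cons a u) (Fin.cons b v)
    = ∑ c : ZMod 2, ∑ d : ZMod 2, chi (a*c) * chi (d*b) *
        ((stdHadamard k * (Matrix.of fun x y => A (Fin.cons c x) (Fin.cons d y))
          * stdHadamard k) u v) := by
  rw [Matrix.mul_apply, sum_cons]
  simp_rw [Matrix.mul_apply, sum_cons k, stdHadamard_cons, Matrix.of_apply,
    Finset.sum_mul, Finset.mul_sum]
  trans ∑ c : ZMod 2, ∑ d : ZMod 2, ∑ t : Fin k → ZMod 2, ∑ s : Fin k → ZMod 2,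
      chi (a * c) * stdHadamard k u s * A (Fin.cons c s) (Fin.cons d t) *
        (chi (d * b) * stdHadamard k t v)
  · trans ∑ d : ZMod 2, ∑ c : ZMod 2, ∑ t : Fin k → ZMod 2, ∑ s : Fin k → ZMod 2,
        chi (a * c) * stdHadamard k u s * A (Fin.cons c s) (Fin.cons d t) *
          (chi (d * b) * stdHadamard k t v)
    · exact Finset.sum_congr rfl fun d _ => Finset.sum_comm
    · exact Finset.sum_comm
  · refine Finset.sum_congr rfl fun c _ => Finset.sum_congr rfl fun d _ => ?_
    refine Finset.sum_congr rfl fun t _ => Finset.sum_congr rfl fun s _ => ?_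
    ring

theorem std_hadamard_diag_blocks (k : ℕ)
    (A : Matrix (Fin (k + 1) → ZMod 2) (Fin (k + 1) → ZMod 2) ℝ)
    (hsymm : A.IsSymm)
    (hdiag : Matrix.IsDiag ((stdHadamard (k + 1))⁻¹ * A * stdHadamard (k + 1)))
    (A₁ A₂ X : Matrix (Fin k → ZMod 2) (Fin k → ZMod 2) ℝ)
    (hA₁ : A₁ = Matrix.of fun u v => A (Fin.cons 0 u) (Fin.cons 0 v))
    (hA₂ : A₂ = Matrix.of fun u v => A (Fin.cons 1 u) (Fin.cons 1 v))
    (hX : X = Matrix.of fun u v => A (Fin.cons 0 u) (Fin.cons 1 v)) :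
    A₁ = A₂ ∧ X = Xᵀ ∧
      Matrix.IsDiag ((stdHadamard k)⁻¹ * A₁ * stdHadamard k) ∧
      Matrix.IsDiag ((stdHadamard k)⁻¹ * X * stdHadamard k) := by
  have hP := offdiag_of_isDiag (k+1) A hdiag
  set Q : ZMod 2 → ZMod 2 → Matrix (Fin k → ZMod 2) (Fin k → ZMod 2) ℝ :=
    fun c d => stdHadamard k * (Matrix.of fun x y => A (Fin.cons c x) (Fin.cons d y))
      * stdHadamard k with hQ
  have hentry : ∀ (a b : ZMod 2) (u v : Fin k → ZMod 2),
      (stdHadamard (k+1) * A * stdHadamard (k+1)) (Fin.cons a u) (Fin.cons b v)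
      = ∑ c : ZMod 2, ∑ d : ZMod 2, chi (a*c) * chi (d*b) * Q c d u v :=
    fun a b u v => P_entry k A a b u v
  -- inequality of cons with distinct heads
  have hne : ∀ (a b : ZMod 2) (u v : Fin k → ZMod 2), a ≠ b →
      (Fin.cons a u : Fin (k+1) → ZMod 2) ≠ Fin.cons b v := by
    intro a b u v hab h
    exact hab (by simpa using congrFun h 0)
  have hne' : ∀ (a : ZMod 2) (u v : Fin k → ZMod 2), u ≠ v →
      (Fin.cons a u : Fin (k+1) → ZMod 2) ≠ Fin.cons a v := by
    intro a u v huv h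
    exact huv (funext fun i => by simpa using congrFun h i.succ)
  -- the four equations
  have E01 : ∀ u v, Q 0 0 u v - Q 0 1 u v + Q 1 0 u v - Q 1 1 u v = 0 := by
    intro u v
    have h0 := hP _ _ (hne 0 1 u v (by decide))
    rw [hentry] at h0
    simp only [sum_zmod2, chi_zero, chi_one, mul_zero, zero_mul, mul_one, one_mul] at h0
    linarith [h0]
  have E10 : ∀ u v, Q 0 0 u v + Q 0 1 u v - Q 1 0 u v - Q 1 1 u v = 0 := by
    intro u v
    have h0 := hP _ _ (hne 1 0 u v (by decide))
    rw [hentry] at h0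
    simp only [sum_zmod2, chi_zero, chi_one, mul_zero, zero_mul, mul_one, one_mul] at h0
    linarith [h0]
  have hQ0011 : Q 0 0 = Q 1 1 := by
    ext u v; have := E01 u v; have := E10 u v; linarith
  have hQ0110 : Q 0 1 = Q 1 0 := by
    ext u v; have := E01 u v; have := E10 u v; linarith
  -- transpose relation
  have hXT : (Matrix.of fun x y => A (Fin.cons (1:ZMod 2) x) (Fin.cons (0:ZMod 2) y))
      = (Matrix.of fun u v => A (Fin.cons (0:ZMod 2) u) (Fin.cons (1:ZMod 2) v))ᵀ := by
    ext x y
    exact (hsymm.apply _ _).symm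
  have hA12 : A₁ = A₂ := by
    rw [hA₁, hA₂]
    exact cancel_HMH k _ _ hQ0011
  have hXXT : X = Xᵀ := by
    rw [hX]
    have h1 := hQ0110
    simp only [hQ] at h1
    rw [hXT] at h1
    exact cancel_HMH k _ _ h1
  have E00 : ∀ u v, u ≠ v → Q 0 0 u v + Q 0 1 u v + Q 1 0 u v + Q 1 1 u v = 0 := by
    intro u v huv
    have h0 := hP _ _ (hne' 0 u v huv)
    rw [hentry] at h0
    simp only [sum_zmod2, chi_zero, chi_one, mul_zero, zero_mul, mul_one, one_mul] at h0
    linarith [h0]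
  have E11 : ∀ u v, u ≠ v → Q 0 0 u v - Q 0 1 u v - Q 1 0 u v + Q 1 1 u v = 0 := by
    intro u v huv
    have h0 := hP _ _ (hne' 1 u v huv)
    rw [hentry] at h0
    simp only [sum_zmod2, chi_zero, chi_one, mul_zero, zero_mul, mul_one, one_mul] at h0
    linarith [h0]
  have q00zero : ∀ u v, u ≠ v → Q 0 0 u v = 0 := by
    intro u v huv
    have h1 := E00 u v huv
    have h2 := E11 u v huv
    have h3 := congrFun (congrFun hQ0011 u) v
    have h4 := congrFun (congrFun hQ0110 u) v
    linarith
  have q01zero : ∀ u v, u ≠ v → Q 0 1 u v = 0 := by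
    intro u v huv
    have h1 := E00 u v huv
    have h2 := E11 u v huv
    have h3 := congrFun (congrFun hQ0011 u) v
    have h4 := congrFun (congrFun hQ0110 u) v
    linarith
  refine ⟨hA12, hXXT, ?_, ?_⟩
  · refine isDiag_of_offdiag k A₁ fun u v huv => ?_
    rw [hA₁]
    exact q00zero u v huv
  · refine isDiag_of_offdiag k X fun u v huv => ?_
    rw [hX]
    exact q01zero u v huv
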